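/- Theorem 5.3 (deterministic interpolation for homogeneous divisible items): For every c ∈ [0,1] and all positive integers n and m, there exists a deterministic mechanism M for n agents and m homogeneous divisible items such that (i) M is e^{−c}-MNW, i.e., for every valuation profile and every agent i, u_i(M(profile)) ≥ e^{−c} · u_i(x*) where x* is an MNW allocation for the profile; and (ii) M has incentive ratio at most 2^{1−c}, i.e., for every profile, every agent i, and every misreport v_i', agent i's utility with respect to his true values under M applied to the misreported profile is at most 2^{1−c} times his utility under M applied to the true profile. -/

import Mathlib

/-- An allocation of `m` homogeneous divisible items among `n` agents: a matrix of
fractions in `[0,1]` whose column sums are at most `1`. -/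
def ItemAlloc {n m : ℕ} (x : Fin n → Fin m → ℝ) : Prop :=
  (∀ i t, x i t ∈ Set.Icc (0 : ℝ) 1) ∧ ∀ t, (∑ i, x i t) ≤ 1

/-- A complete allocation: every item is fully allocated. -/
def ItemAllocComplete {n m : ℕ} (x : Fin n → Fin m → ℝ) : Prop :=
  ItemAlloc x ∧ ∀ t, (∑ i, x i t) = 1

/-- Agent `i`'s utility under the values `v` and the allocation `x`. -/
def itemUtil {n m : ℕ} (v : Fin n → Fin m → ℝ) (x : Fin n → Fin m → ℝ) (i : Fin n) : ℝ :=
  ∑ t, v i t * x i t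

/-- A valid profile of item values: nonnegative with positive total for each agent. -/
def ValidItemProfile {n m : ℕ} (v : Fin n → Fin m → ℝ) : Prop :=
  ∀ i, (∀ t, 0 ≤ v i t) ∧ 0 < ∑ t, v i t

/-- An MNW allocation for homogeneous divisible items. -/
def IsItemMNW {n m : ℕ} (v : Fin n → Fin m → ℝ) (x : Fin n → Fin m → ℝ) : Prop :=
  ItemAlloc x ∧ ∀ z : Fin n → Fin m → ℝ, ItemAlloc z →
    (∏ i, itemUtil v z i) ≤ ∏ i, itemUtil v x i

/-- A complete MNW allocation for homogeneous divisible items (no free disposal). -/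
def IsItemCompleteMNW {n m : ℕ} (v : Fin n → Fin m → ℝ) (x : Fin n → Fin m → ℝ) : Prop :=
  ItemAllocComplete x ∧ ∀ z : Fin n → Fin m → ℝ, ItemAllocComplete z →
    (∏ i, itemUtil v z i) ≤ ∏ i, itemUtil v x i

/-!
The mechanism damps the Partial Allocation mechanism. Take an MNW allocation `x` and give agent
`i` the fraction `f_i ^ c` of its bundle `x_i`, where `f_i` is the Nash product of the other
agents at `x` divided by the largest Nash product they can reach on their own. First-order
optimality of `x` (proportional fairness: `∑ j, u_j z / u_j x ≤ n` for every allocation `z`)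
gives `f_i ≥ e⁻¹`, hence the `e^{-c}` guarantee. A misreport of `i` moves `x` to `x'` but
leaves the denominator of `f_i` unchanged. Maximality of `x` gives `f_i' · u_i x' ≤ f_i · u_i x`,
and proportional fairness at `x` and at `x'` together with `r + 1/r ≥ 2` gives
`u_i x' ≤ 2 u_i x`. Interpolating these two bounds with weights `c` and `1 - c` yields the
ratio `2^{1-c}`.
-/

open Finset

theorem Finset.sum_nonpos_of_prod_one_add_mul_le_one {ι : Type*} [DecidableEq ι] {s : Finset ι}
    {d : ι → ℝ} (h : ∀ lam ∈ Set.Icc (0 : ℝ) 1, ∏ j ∈ s, (1 + lam * d j) ≤ 1) :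
    ∑ j ∈ s, d j ≤ 0 := by
  have hmax : IsLocalMaxOn (fun lam => ∏ j ∈ s, (1 + lam * d j)) (Set.Icc 0 1) 0 :=
    IsMaxOn.localize fun lam hlam => by simpa using h lam hlam
  have hderiv : HasDerivAt (fun lam => ∏ j ∈ s, (1 + lam * d j)) (∑ j ∈ s, d j) 0 := by
    have := HasDerivAt.fun_finsetProd (u := s) (x := (0 : ℝ)) (f := fun j lam => 1 + lam * d j)
      (f' := d) fun j _ => by simpa using ((hasDerivAt_id (0 : ℝ)).mul_const (d j)).const_add 1
    simpa using this
  have hdir : (1 : ℝ) ∈ posTangentConeAt (Set.Icc (0 : ℝ) 1) 0 :=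
    mem_posTangentConeAt_of_segment_subset (by simp [segment_eq_Icc])
  simpa using hmax.hasFDerivWithinAt_nonpos hderiv.hasDerivWithinAt.hasFDerivWithinAt hdir

theorem Finset.prod_le_exp_sum_sub_card {ι : Type*} {s : Finset ι} {r : ι → ℝ}
    (hr : ∀ j ∈ s, 0 ≤ r j) : ∏ j ∈ s, r j ≤ Real.exp (∑ j ∈ s, r j - #s) := by
  calc ∏ j ∈ s, r j ≤ ∏ j ∈ s, Real.exp (r j - 1) :=
        prod_le_prod hr fun j _ => by linarith [Real.add_one_le_exp (r j - 1)]
    _ = Real.exp (∑ j ∈ s, r j - #s) := by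
        rw [← Real.exp_sum, sum_sub_distrib, sum_const, nsmul_one]

theorem div_add_div_sub_two {a b : ℝ} (ha : a ≠ 0) (hb : b ≠ 0) :
    a / b + b / a - 2 = (a - b) ^ 2 / (a * b) := by
  field_simp; ring

theorem Finset.two_mul_card_le_sum_div_add_div {ι : Type*} {s : Finset ι} {a b : ι → ℝ}
    (ha : ∀ j ∈ s, 0 < a j) (hb : ∀ j ∈ s, 0 < b j) :
    2 * (#s : ℝ) ≤ ∑ j ∈ s, (a j / b j + b j / a j) := by
  have : ∀ j ∈ s, 0 ≤ a j / b j + b j / a j - 2 := fun j hj => by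
    rw [div_add_div_sub_two (ha j hj).ne' (hb j hj).ne']
    exact div_nonneg (sq_nonneg _) (mul_pos (ha j hj) (hb j hj)).le
  have := sum_nonneg this
  rw [sum_sub_distrib, sum_const, nsmul_eq_mul] at this
  linarith

theorem Finset.eq_of_sum_div_add_div_le_two_mul_card {ι : Type*} {s : Finset ι} {a b : ι → ℝ}
    (ha : ∀ j ∈ s, 0 < a j) (hb : ∀ j ∈ s, 0 < b j)
    (h : ∑ j ∈ s, (a j / b j + b j / a j) ≤ 2 * #s) : ∀ j ∈ s, a j = b j := by
  have hnonneg : ∀ j ∈ s, 0 ≤ (a j - b j) ^ 2 / (a j * b j) := fun j hj =>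
    div_nonneg (sq_nonneg _) (mul_pos (ha j hj) (hb j hj)).le
  have hsum : ∑ j ∈ s, (a j - b j) ^ 2 / (a j * b j) = 0 := by
    refine le_antisymm ?_ (sum_nonneg hnonneg)
    rw [← sum_congr rfl fun j hj => div_add_div_sub_two (ha j hj).ne' (hb j hj).ne',
      sum_sub_distrib, sum_const, nsmul_eq_mul]
    linarith
  intro j hj
  have := (sum_eq_zero_iff_of_nonneg hnonneg).1 hsum j hj
  rw [div_eq_zero_iff, or_iff_left (mul_pos (ha j hj) (hb j hj)).ne'] at this
  exact sub_eq_zero.1 (pow_eq_zero_iff two_ne_zero |>.1 this)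

theorem rpow_mul_le_of_mul_le_of_le_mul {p q a b k c : ℝ} (hp : 0 ≤ p) (ha : 0 ≤ a)
    (hq : 0 ≤ q) (hb : 0 ≤ b) (hk : 0 ≤ k) (hc : c ∈ Set.Icc (0 : ℝ) 1)
    (hpq : p * a ≤ q * b) (hab : a ≤ k * b) : p ^ c * a ≤ k ^ (1 - c) * (q ^ c * b) := by
  have hsplit : ∀ {x : ℝ}, 0 ≤ x → x ^ c * x ^ (1 - c) = x := fun hx => by
    rw [← Real.rpow_add' hx (by norm_num), add_sub_cancel, Real.rpow_one]
  calc p ^ c * a = (p * a) ^ c * a ^ (1 - c) := by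
        rw [Real.mul_rpow hp ha, mul_assoc, hsplit ha]
    _ ≤ (q * b) ^ c * (k * b) ^ (1 - c) := by
        gcongr
        · exact hc.1
        · linarith [hc.2]
    _ = k ^ (1 - c) * (q ^ c * (b ^ c * b ^ (1 - c))) := by
        rw [Real.mul_rpow hq hb, Real.mul_rpow hk hb]
        ring
    _ = k ^ (1 - c) * (q ^ c * b) := by rw [hsplit hb]

section Allocations

variable {n m : ℕ}

theorem isCompact_setOf_itemAlloc : IsCompact {x : Fin n → Fin m → ℝ | ItemAlloc x} := by
  have hbox : IsCompact
      (Set.univ.pi fun _ : Fin n => Set.univ.pi fun _ : Fin m => Set.Icc (0 : ℝ) 1) :=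
    isCompact_univ_pi fun _ => isCompact_univ_pi fun _ => isCompact_Icc
  refine hbox.of_isClosed_subset ?_ fun x hx =>
    Set.mem_univ_pi.2 fun i => Set.mem_univ_pi.2 (hx.1 i)
  simp only [ItemAlloc, Set.ofPred_and, Set.ofPred_forall]
  refine .inter (isClosed_iInter fun i => isClosed_iInter fun t => ?_)
    (isClosed_iInter fun t => isClosed_le (by fun_prop) continuous_const)
  exact isClosed_Icc.preimage (by fun_prop)

theorem ItemAlloc.add_smul {x y : Fin n → Fin m → ℝ} (hx : ItemAlloc x) (hy : ItemAlloc y)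
    {a b : ℝ} (ha : 0 ≤ a) (hb : 0 ≤ b) (hab : a + b = 1) : ItemAlloc (a • x + b • y) := by
  refine ⟨fun i t => ⟨?_, ?_⟩, fun t => ?_⟩
  · have := (hx.1 i t).1; have := (hy.1 i t).1
    simp only [Pi.add_apply, Pi.smul_apply, smul_eq_mul]; positivity
  · have := (hx.1 i t).2; have := (hy.1 i t).2
    simp only [Pi.add_apply, Pi.smul_apply, smul_eq_mul]; nlinarith
  · have := hx.2 t; have := hy.2 t
    simp only [Pi.add_apply, Pi.smul_apply, smul_eq_mul, sum_add_distrib, ← mul_sum]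
    nlinarith

theorem itemAlloc_equalSplit (hn : 0 < n) :
    ItemAlloc fun (_ : Fin n) (_ : Fin m) => (n : ℝ)⁻¹ := by
  refine ⟨fun _ _ => ⟨by positivity, inv_le_one_of_one_le₀ (by exact_mod_cast hn)⟩, fun _ => ?_⟩
  simp [card_univ, (Nat.cast_pos.2 hn).ne']

theorem ItemAlloc.mul_rows {x : Fin n → Fin m → ℝ} (hx : ItemAlloc x) {f : Fin n → ℝ}
    (hf : ∀ i, f i ∈ Set.Icc (0 : ℝ) 1) : ItemAlloc fun i t => f i * x i t := by
  refine ⟨fun i t => ⟨mul_nonneg (hf i).1 (hx.1 i t).1, ?_⟩, fun t => ?_⟩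
  · exact mul_le_one₀ (hf i).2 (hx.1 i t).1 (hx.1 i t).2
  · refine le_trans (sum_le_sum fun i _ => ?_) (hx.2 t)
    exact mul_le_of_le_one_left (hx.1 i t).1 (hf i).2

end Allocations

section Utilities

variable {n m : ℕ} {v x : Fin n → Fin m → ℝ}

theorem itemUtil_nonneg (hv : ValidItemProfile v) (hx : ItemAlloc x) (i : Fin n) :
    0 ≤ itemUtil v x i :=
  sum_nonneg fun t _ => mul_nonneg ((hv i).1 t) (hx.1 i t).1

theorem itemUtil_add_smul (v x y : Fin n → Fin m → ℝ) (a b : ℝ) (i : Fin n) :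
    itemUtil v (a • x + b • y) i = a * itemUtil v x i + b * itemUtil v y i := by
  simp only [itemUtil, Pi.add_apply, Pi.smul_apply, smul_eq_mul, mul_sum, ← sum_add_distrib]
  exact sum_congr rfl fun t _ => by ring

theorem itemUtil_mul_rows (v x : Fin n → Fin m → ℝ) (f : Fin n → ℝ) (i : Fin n) :
    itemUtil v (fun i t => f i * x i t) i = f i * itemUtil v x i := by
  simp only [itemUtil, mul_sum]
  exact sum_congr rfl fun t _ => by ring

theorem itemUtil_update_of_ne (v x : Fin n → Fin m → ℝ) {i j : Fin n} (hji : j ≠ i)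
    (w : Fin m → ℝ) : itemUtil (Function.update v i w) x j = itemUtil v x j := by
  simp only [itemUtil, Function.update_of_ne hji]

theorem prod_erase_itemUtil_update (v x : Fin n → Fin m → ℝ) (i : Fin n) (w : Fin m → ℝ) :
    ∏ j ∈ univ.erase i, itemUtil (Function.update v i w) x j =
      ∏ j ∈ univ.erase i, itemUtil v x j :=
  prod_congr rfl fun _ hj => itemUtil_update_of_ne v x (ne_of_mem_erase hj) w

theorem ValidItemProfile.update (hv : ValidItemProfile v) (i : Fin n) {w : Fin m → ℝ}
    (hw : (∀ t, 0 ≤ w t) ∧ 0 < ∑ t, w t) : ValidItemProfile (Function.update v i w) := by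
  intro j
  rcases eq_or_ne j i with rfl | hj
  · simpa using hw
  · simpa [Function.update_of_ne hj] using hv j

end Utilities

section NashMaximizers

variable {n m : ℕ} {v x y : Fin n → Fin m → ℝ}

theorem exists_maximizer_prod_itemUtil (v : Fin n → Fin m → ℝ) (S : Finset (Fin n)) :
    ∃ x, ItemAlloc x ∧
      ∀ z, ItemAlloc z → ∏ j ∈ S, itemUtil v z j ≤ ∏ j ∈ S, itemUtil v x j := by
  have hne : {x : Fin n → Fin m → ℝ | ItemAlloc x}.Nonempty :=
    ⟨0, fun _ _ => by simp, fun _ => by simp⟩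
  obtain ⟨x, hx, hmax⟩ := isCompact_setOf_itemAlloc.exists_isMaxOn hne
    (f := fun x => ∏ j ∈ S, itemUtil v x j) (by unfold itemUtil; fun_prop)
  exact ⟨x, hx, fun z hz => hmax hz⟩

noncomputable def nashMaxAlloc (v : Fin n → Fin m → ℝ) (S : Finset (Fin n)) :
    Fin n → Fin m → ℝ :=
  (exists_maximizer_prod_itemUtil v S).choose

theorem itemAlloc_nashMaxAlloc (v : Fin n → Fin m → ℝ) (S : Finset (Fin n)) :
    ItemAlloc (nashMaxAlloc v S) :=
  (exists_maximizer_prod_itemUtil v S).choose_spec.1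

theorem prod_itemUtil_le_nashMaxAlloc (v : Fin n → Fin m → ℝ) (S : Finset (Fin n))
    {z : Fin n → Fin m → ℝ} (hz : ItemAlloc z) :
    ∏ j ∈ S, itemUtil v z j ≤ ∏ j ∈ S, itemUtil v (nashMaxAlloc v S) j :=
  (exists_maximizer_prod_itemUtil v S).choose_spec.2 z hz

theorem isItemMNW_nashMaxAlloc (v : Fin n → Fin m → ℝ) : IsItemMNW v (nashMaxAlloc v univ) :=
  ⟨itemAlloc_nashMaxAlloc v univ, fun _ => prod_itemUtil_le_nashMaxAlloc v univ⟩

theorem IsItemMNW.itemUtil_pos (hv : ValidItemProfile v) (hx : IsItemMNW v x) (j : Fin n) :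
    0 < itemUtil v x j := by
  have hn : 0 < n := j.pos
  have hsplit : 0 < ∏ k, itemUtil v (fun _ _ => (n : ℝ)⁻¹) k :=
    prod_pos fun k _ => by
      simpa [itemUtil, ← sum_mul] using mul_pos (hv k).2 (inv_pos.2 (Nat.cast_pos.2 hn))
  have hprod := hsplit.trans_le (hx.2 _ (itemAlloc_equalSplit hn))
  exact (itemUtil_nonneg hv hx.1 j).lt_of_ne
    (prod_ne_zero_iff.1 hprod.ne' j (mem_univ j)).symm

theorem IsItemMNW.sum_itemUtil_div_le (hv : ValidItemProfile v) (hx : IsItemMNW v x)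
    {z : Fin n → Fin m → ℝ} (hz : ItemAlloc z) :
    ∑ j, itemUtil v z j / itemUtil v x j ≤ n := by
  have hpos := hx.itemUtil_pos hv
  have hP : 0 < ∏ j, itemUtil v x j := prod_pos fun j _ => hpos j
  suffices ∑ j, (itemUtil v z j / itemUtil v x j - 1) ≤ 0 by
    simpa [sum_sub_distrib] using this
  refine sum_nonpos_of_prod_one_add_mul_le_one fun lam hlam => ?_
  have hcomb := hx.2 _ (hx.1.add_smul hz (sub_nonneg.2 hlam.2) hlam.1 (sub_add_cancel 1 lam))
  have hutil : ∀ j, itemUtil v ((1 - lam) • x + lam • z) j =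
      itemUtil v x j * (1 + lam * (itemUtil v z j / itemUtil v x j - 1)) := fun j => by
    rw [itemUtil_add_smul]; field_simp [(hpos j).ne']; ring
  simp only [hutil, prod_mul_distrib] at hcomb
  exact (mul_le_iff_le_one_right hP).1 hcomb

theorem IsItemMNW.itemUtil_eq (hv : ValidItemProfile v) (hx : IsItemMNW v x)
    (hy : IsItemMNW v y) (i : Fin n) : itemUtil v x i = itemUtil v y i := by
  refine eq_of_sum_div_add_div_le_two_mul_card (s := univ) (fun j _ => hx.itemUtil_pos hv j)
    (fun j _ => hy.itemUtil_pos hv j) ?_ i (mem_univ i)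
  rw [sum_add_distrib, card_univ, Fintype.card_fin]
  linarith [hx.sum_itemUtil_div_le hv hy.1, hy.sum_itemUtil_div_le hv hx.1]

theorem IsItemMNW.itemUtil_update_le_two_mul {i : Fin n} {w : Fin m → ℝ}
    {x' : Fin n → Fin m → ℝ} (hv : ValidItemProfile v)
    (hv' : ValidItemProfile (Function.update v i w))
    (hx : IsItemMNW v x) (hx' : IsItemMNW (Function.update v i w) x') :
    itemUtil v x' i ≤ 2 * itemUtil v x i := by
  have hupd : ∀ z, ∀ j ∈ univ.erase i, itemUtil (Function.update v i w) z j = itemUtil v z j :=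
    fun z j hj => itemUtil_update_of_ne v z (ne_of_mem_erase hj) w
  have hpos := hx.itemUtil_pos hv
  have hpos' : ∀ j ∈ univ.erase i, 0 < itemUtil v x' j := fun j hj =>
    hupd x' j hj ▸ hx'.itemUtil_pos hv' j
  have hforth := hx.sum_itemUtil_div_le hv hx'.1
  have hback := hx'.sum_itemUtil_div_le hv' hx.1
  rw [← add_sum_erase _ _ (mem_univ i)] at hforth hback
  rw [sum_congr rfl fun j hj => by rw [hupd x j hj, hupd x' j hj]] at hback
  have hback_i : 0 ≤ itemUtil (Function.update v i w) x i /
      itemUtil (Function.update v i w) x' i :=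
    div_nonneg (itemUtil_nonneg hv' hx.1 i) (hx'.itemUtil_pos hv' i).le
  have hamgm := two_mul_card_le_sum_div_add_div hpos' fun j _ => hpos j
  have hcard : ((univ.erase i).card : ℝ) + 1 = n := by
    exact_mod_cast (card_erase_add_one (mem_univ i)).trans (card_fin n)
  rw [sum_add_distrib] at hamgm
  rw [← div_le_iff₀ (hpos i)]
  linarith

end NashMaximizers

section PartialAllocation

variable {n m : ℕ} {v : Fin n → Fin m → ℝ}

noncomputable def othersNash (v : Fin n → Fin m → ℝ) (i : Fin n) : ℝ :=
  ∏ j ∈ univ.erase i, itemUtil v (nashMaxAlloc v univ) j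

noncomputable def othersMaxNash (v : Fin n → Fin m → ℝ) (i : Fin n) : ℝ :=
  ∏ j ∈ univ.erase i, itemUtil v (nashMaxAlloc v (univ.erase i)) j

noncomputable def partialFraction (v : Fin n → Fin m → ℝ) (i : Fin n) : ℝ :=
  othersNash v i / othersMaxNash v i

noncomputable def partialAllocMech (c : ℝ) (v : Fin n → Fin m → ℝ) : Fin n → Fin m → ℝ :=
  fun i t => partialFraction v i ^ c * nashMaxAlloc v univ i t

theorem itemUtil_partialAllocMech (c : ℝ) (v v' : Fin n → Fin m → ℝ) (i : Fin n) :
    itemUtil v' (partialAllocMech c v) i =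
      partialFraction v i ^ c * itemUtil v' (nashMaxAlloc v univ) i :=
  itemUtil_mul_rows v' _ _ i

theorem othersMaxNash_update_self (v : Fin n → Fin m → ℝ) (i : Fin n) (w : Fin m → ℝ) :
    othersMaxNash (Function.update v i w) i = othersMaxNash v i := by
  apply le_antisymm
  · rw [othersMaxNash, prod_erase_itemUtil_update]
    exact prod_itemUtil_le_nashMaxAlloc v _ (itemAlloc_nashMaxAlloc _ _)
  · rw [othersMaxNash, ← prod_erase_itemUtil_update v _ i w]
    exact prod_itemUtil_le_nashMaxAlloc _ _ (itemAlloc_nashMaxAlloc _ _)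

theorem othersNash_le_othersMaxNash (v : Fin n → Fin m → ℝ) (i : Fin n) :
    othersNash v i ≤ othersMaxNash v i :=
  prod_itemUtil_le_nashMaxAlloc v _ (itemAlloc_nashMaxAlloc v univ)

theorem othersNash_pos (hv : ValidItemProfile v) (i : Fin n) : 0 < othersNash v i :=
  prod_pos fun j _ => (isItemMNW_nashMaxAlloc v).itemUtil_pos hv j

theorem othersMaxNash_pos (hv : ValidItemProfile v) (i : Fin n) : 0 < othersMaxNash v i :=
  (othersNash_pos hv i).trans_le (othersNash_le_othersMaxNash v i)

theorem othersMaxNash_le_exp_one_mul (hv : ValidItemProfile v) (i : Fin n) :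
    othersMaxNash v i ≤ Real.exp 1 * othersNash v i := by
  set x := nashMaxAlloc v univ
  set y := nashMaxAlloc v (univ.erase i)
  have hy : ItemAlloc y := itemAlloc_nashMaxAlloc v _
  have hpos := (isItemMNW_nashMaxAlloc v).itemUtil_pos hv
  have hratio : ∏ j ∈ univ.erase i, itemUtil v y j / itemUtil v x j ≤ Real.exp 1 := by
    refine (prod_le_exp_sum_sub_card fun j _ =>
      div_nonneg (itemUtil_nonneg hv hy j) (hpos j).le).trans ?_
    have hsum := (isItemMNW_nashMaxAlloc v).sum_itemUtil_div_le hv hy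
    rw [← add_sum_erase _ _ (mem_univ i)] at hsum
    have hcard : ((univ.erase i).card : ℝ) + 1 = n := by
      exact_mod_cast (card_erase_add_one (mem_univ i)).trans (card_fin n)
    have hri := div_nonneg (itemUtil_nonneg hv hy i) (hpos i).le
    gcongr
    linarith
  calc othersMaxNash v i
      = (∏ j ∈ univ.erase i, itemUtil v y j / itemUtil v x j) * othersNash v i := by
        rw [othersNash, othersMaxNash, ← prod_mul_distrib]
        exact prod_congr rfl fun j _ => (div_mul_cancel₀ _ (hpos j).ne').symm
    _ ≤ Real.exp 1 * othersNash v i := by gcongr; exact (othersNash_pos hv i).le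

theorem partialFraction_mem_Icc (hv : ValidItemProfile v) (i : Fin n) :
    partialFraction v i ∈ Set.Icc (0 : ℝ) 1 :=
  ⟨div_nonneg (othersNash_pos hv i).le (othersMaxNash_pos hv i).le,
    div_le_one_of_le₀ (othersNash_le_othersMaxNash v i) (othersMaxNash_pos hv i).le⟩

theorem exp_neg_one_le_partialFraction (hv : ValidItemProfile v) (i : Fin n) :
    Real.exp (-1) ≤ partialFraction v i := by
  rw [partialFraction, le_div_iff₀ (othersMaxNash_pos hv i),
    Real.exp_neg, inv_mul_le_iff₀ (Real.exp_pos 1)]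
  exact othersMaxNash_le_exp_one_mul hv i

theorem othersNash_update_mul_le (v : Fin n → Fin m → ℝ) (i : Fin n) (w : Fin m → ℝ) :
    othersNash (Function.update v i w) i *
        itemUtil v (nashMaxAlloc (Function.update v i w) univ) i ≤
      othersNash v i * itemUtil v (nashMaxAlloc v univ) i := by
  rw [othersNash, othersNash, prod_erase_itemUtil_update, prod_erase_mul _ _ (mem_univ i),
    prod_erase_mul _ _ (mem_univ i)]
  exact prod_itemUtil_le_nashMaxAlloc v univ (itemAlloc_nashMaxAlloc _ _)

theorem partialFraction_update_mul_le (hv : ValidItemProfile v) (i : Fin n) (w : Fin m → ℝ) :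
    partialFraction (Function.update v i w) i *
        itemUtil v (nashMaxAlloc (Function.update v i w) univ) i ≤
      partialFraction v i * itemUtil v (nashMaxAlloc v univ) i := by
  rw [partialFraction, partialFraction, othersMaxNash_update_self, div_mul_eq_mul_div,
    div_mul_eq_mul_div]
  exact div_le_div_of_nonneg_right (othersNash_update_mul_le v i w) (othersMaxNash_pos hv i).le

end PartialAllocation

theorem deterministic_interpolation_items_general (c : ℝ) (hc : c ∈ Set.Icc (0 : ℝ) 1)
    (n m : ℕ) :
    ∃ M : (Fin n → Fin m → ℝ) → (Fin n → Fin m → ℝ),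
      (∀ v, ValidItemProfile v → ItemAlloc (M v)) ∧
      (∀ v, ValidItemProfile v → ∀ xstar, IsItemMNW v xstar →
        ∀ i, Real.exp (-c) * itemUtil v xstar i ≤ itemUtil v (M v) i) ∧
      (∀ v, ValidItemProfile v → ∀ (i : Fin n) (vi' : Fin m → ℝ),
        ((∀ t, 0 ≤ vi' t) ∧ 0 < ∑ t, vi' t) →
        itemUtil v (M (Function.update v i vi')) i ≤
          (2 : ℝ) ^ (1 - c) * itemUtil v (M v) i) := by
  refine ⟨partialAllocMech c, fun v hv => (itemAlloc_nashMaxAlloc v univ).mul_rows fun i => ?_,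
    ?_, ?_⟩
  · have hf := partialFraction_mem_Icc hv i
    exact ⟨Real.rpow_nonneg hf.1 c, Real.rpow_le_one hf.1 hf.2 hc.1⟩
  · intro v hv xstar hxstar i
    rw [itemUtil_partialAllocMech,
      hxstar.itemUtil_eq hv (isItemMNW_nashMaxAlloc v) i, neg_eq_neg_one_mul, Real.exp_mul]
    gcongr
    · exact (isItemMNW_nashMaxAlloc v).itemUtil_pos hv i |>.le
    · exact hc.1
    · exact exp_neg_one_le_partialFraction hv i
  · intro v hv i w hw
    have hv' := hv.update i hw
    set v' := Function.update v i w
    rw [itemUtil_partialAllocMech, itemUtil_partialAllocMech]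
    refine rpow_mul_le_of_mul_le_of_le_mul (partialFraction_mem_Icc hv' i).1
      (itemUtil_nonneg hv (itemAlloc_nashMaxAlloc v' univ) i) (partialFraction_mem_Icc hv i).1
      (itemUtil_nonneg hv (itemAlloc_nashMaxAlloc v univ) i) zero_le_two hc
      (partialFraction_update_mul_le hv i w)
      ((isItemMNW_nashMaxAlloc v).itemUtil_update_le_two_mul hv hv' (isItemMNW_nashMaxAlloc v'))

/-- Theorem 5.3 (deterministic interpolation for homogeneous divisible items): for
every `c ∈ [0,1]` and all `n, m`, there is a deterministic mechanism `M` that always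
outputs an allocation, is `e^{−c}`-MNW on every valid profile, and has incentive
ratio at most `2^{1−c}`: for every valid profile, agent `i`, and valid misreport
`vi'`, agent `i`'s true utility under `M` applied to the misreported profile is at
most `2^{1−c}` times his utility under `M` applied to the true profile. -/
theorem deterministic_interpolation_items (c : ℝ) (hc : c ∈ Set.Icc (0 : ℝ) 1)
    (n m : ℕ) (hn : 0 < n) (hm : 0 < m) :
    ∃ M : (Fin n → Fin m → ℝ) → (Fin n → Fin m → ℝ),
      (∀ v, ValidItemProfile v → ItemAlloc (M v)) ∧
      (∀ v, ValidItemProfile v → ∀ xstar, IsItemMNW v xstar →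
        ∀ i, Real.exp (-c) * itemUtil v xstar i ≤ itemUtil v (M v) i) ∧
      (∀ v, ValidItemProfile v → ∀ (i : Fin n) (vi' : Fin m → ℝ),
        ((∀ t, 0 ≤ vi' t) ∧ 0 < ∑ t, vi' t) →
        itemUtil v (M (Function.update v i vi')) i ≤
          (2 : ℝ) ^ (1 - c) * itemUtil v (M v) i) :=
  deterministic_interpolation_items_general c hc n m
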